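/- Let f be an odd-sigmoid function with ω := 1/f'(0), let ε > 0, and let {a_n} be a positive sequence such that only finitely many a_n are less than ω + ε. Define Φ_m := φ_{a_m} ∘ ⋯ ∘ φ_{a_1} where φ_a(x) := f(a x). Then for every x ≠ 0, liminf_{m→∞} |Φ_m(x)| ≥ ξ_{ω+ε}, where ξ_{ω+ε} > 0 is the unique positive fixed point of φ_{ω+ε}. -/

import Mathlib

open Set Filter Topology

def OddSigmoid (f : ℝ → ℝ) : Prop :=
  ContDiff ℝ 1 f ∧ (∀ x, f (-x) = -f x) ∧ (∃ M, ∀ x, |f x| ≤ M) ∧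
    (∀ x, 0 < deriv f x) ∧ StrictAntiOn (deriv f) (Set.Ici 0)

/-!
Put `b = 1 / f'(0) + ε` and `y m = |Φ m x|`. Oddness gives `y (m+1) = f (a (m+1) * y m)`, and
since eventually `a n ≥ b`, eventually `y (m+1) ≥ g (y m)` with `g t = f (b t)`. Strict concavity
of `f` on `[0, ∞)` gives `t < g t` on `(0, ξ)`, so the truncations `min (y m) ξ` eventually
increase; their limit `L ∈ (0, ξ]` satisfies `g L ≤ L`, which forces `L = ξ`.
-/

namespace OddSigmoid

variable {f : ℝ → ℝ} (hf : OddSigmoid f)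
include hf

theorem continuous : Continuous f :=
  hf.1.continuous

theorem strictMono : StrictMono f :=
  strictMono_of_deriv_pos hf.2.2.2.1

theorem map_zero : f 0 = 0 := by
  have h := hf.2.1 0
  rw [neg_zero] at h
  linarith

theorem pos_of_pos {t : ℝ} (ht : 0 < t) : 0 < f t :=
  hf.map_zero ▸ hf.strictMono ht

theorem abs_apply (t : ℝ) : |f t| = f |t| := by
  rcases le_or_gt 0 t with ht | ht
  · rw [abs_of_nonneg ht, abs_of_nonneg (hf.map_zero ▸ hf.strictMono.monotone ht)]
  · rw [abs_of_neg ht, hf.2.1, abs_of_neg (hf.map_zero ▸ hf.strictMono ht)]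

theorem strictConcaveOn_Ici : StrictConcaveOn ℝ (Ici 0) f := by
  refine StrictAntiOn.strictConcaveOn_of_deriv (convex_Ici 0) hf.continuous.continuousOn ?_
  rw [interior_Ici]
  exact hf.2.2.2.2.mono Ioi_subset_Ici_self

end OddSigmoid

theorem lt_apply_mul_of_mem_Ioo {f : ℝ → ℝ} (hconc : StrictConcaveOn ℝ (Ici 0) f)
    (hf0 : f 0 = 0) {b ξ : ℝ} (hb : 0 < b) (hfix : f (b * ξ) = ξ) {t : ℝ} (ht : t ∈ Ioo 0 ξ) :
    t < f (b * t) := by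
  have hbt : 0 < b * t := mul_pos hb ht.1
  have hbξ : 0 < b * ξ := mul_pos hb (ht.1.trans ht.2)
  -- secant slopes from the origin decrease: `f (b t) / (b t) > f (b ξ) / (b ξ) = 1 / b`
  have hslope := hconc.secant_strict_mono self_mem_Ici hbt.le hbξ.le hbt.ne' hbξ.ne'
    (mul_lt_mul_of_pos_left ht.2 hb)
  simp only [hf0, hfix, sub_zero] at hslope
  rw [div_lt_div_iff₀ hbξ hbt] at hslope
  nlinarith

theorem tendsto_of_apply_le_succ {g : ℝ → ℝ} (hg : Continuous g) {ξ : ℝ} (hgξ : g ξ = ξ)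
    (hlt : ∀ t ∈ Ioo 0 ξ, t < g t) {z : ℕ → ℝ} (hz : ∀ m, z m ∈ Ioc 0 ξ)
    (hstep : ∀ m, g (z m) ≤ z (m + 1)) : Tendsto z atTop (𝓝 ξ) := by
  have hle : ∀ m, z m ≤ z (m + 1) := fun m => by
    rcases (hz m).2.lt_or_eq with h | h
    · exact (hlt _ ⟨(hz m).1, h⟩).le.trans (hstep m)
    · calc z m = g (z m) := by rw [h, hgξ]
        _ ≤ z (m + 1) := hstep m
  have hbdd : BddAbove (range z) := ⟨ξ, forall_mem_range.2 fun m => (hz m).2⟩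
  have hL := tendsto_atTop_ciSup (monotone_nat_of_le_succ hle) hbdd
  have hLξ : ⨆ m, z m ≤ ξ := ciSup_le fun m => (hz m).2
  have hL0 : 0 < ⨆ m, z m := (hz 0).1.trans_le (le_ciSup hbdd 0)
  have hgL : g (⨆ m, z m) ≤ ⨆ m, z m :=
    le_of_tendsto_of_tendsto ((hg.tendsto _).comp hL) (hL.comp (tendsto_add_atTop_nat 1))
      (Eventually.of_forall hstep)
  have hLeq : ⨆ m, z m = ξ := by
    by_contra hne
    exact (hlt _ ⟨hL0, hLξ.lt_of_ne hne⟩).not_ge hgL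
  rwa [hLeq] at hL

theorem le_liminf_of_apply_le_succ {g : ℝ → ℝ} (hg : Continuous g) (hmono : Monotone g)
    {ξ : ℝ} (hξ : 0 < ξ) (hgξ : g ξ = ξ) (hlt : ∀ t ∈ Ioo 0 ξ, t < g t) {y : ℕ → ℝ}
    (hy : ∀ m, 0 < y m) (hstep : ∀ᶠ m in atTop, g (y m) ≤ y (m + 1))
    (hbdd : IsBoundedUnder (· ≤ ·) atTop y) : ξ ≤ liminf y atTop := by
  obtain ⟨N, hN⟩ := eventually_atTop.1 hstep
  have htrunc : Tendsto (fun m => min (y (m + N)) ξ) atTop (𝓝 ξ) := by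
    refine tendsto_of_apply_le_succ hg hgξ hlt (fun m => ⟨lt_min (hy _) hξ, min_le_right _ _⟩)
      fun m => ?_
    rw [hmono.map_min, hgξ, Nat.add_right_comm]
    exact min_le_min_right _ (hN _ (Nat.le_add_left N m))
  have htrunc' := (tendsto_add_atTop_iff_nat (f := fun m => min (y m) ξ) N).1 htrunc
  calc ξ = liminf (fun m => min (y m) ξ) atTop := htrunc'.liminf_eq.symm
    _ ≤ liminf y atTop :=
      liminf_le_liminf (Eventually.of_forall fun m => min_le_left _ _)
        htrunc'.isBoundedUnder_ge hbdd.isCoboundedUnder_ge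

theorem stmt_10_general (f : ℝ → ℝ) (hf : OddSigmoid f) (ε : ℝ) (hε : 0 < ε)
    (a : ℕ → ℝ) (ha : ∀ n, 0 < a n)
    (hfin : {n : ℕ | a n < 1 / deriv f 0 + ε}.Finite)
    (Φ : ℕ → ℝ → ℝ) (hΦ0 : ∀ x, Φ 0 x = x)
    (hΦ : ∀ m x, Φ (m + 1) x = f (a (m + 1) * Φ m x))
    (ξ : ℝ) (hξpos : 0 < ξ) (hξfix : f ((1 / deriv f 0 + ε) * ξ) = ξ) :
    ∀ x : ℝ, x ≠ 0 → ξ ≤ Filter.atTop.liminf (fun m => |Φ m x|) := by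
  intro x hx
  set b := 1 / deriv f 0 + ε
  have hb : 0 < b := by have := hf.2.2.2.1 0; positivity
  have hrec : ∀ m, |Φ (m + 1) x| = f (a (m + 1) * |Φ m x|) := fun m => by
    rw [hΦ, hf.abs_apply, abs_mul, abs_of_pos (ha _)]
  have hpos : ∀ m, 0 < |Φ m x| := fun m => by
    induction m with
    | zero => simpa [hΦ0] using hx
    | succ m ih => exact hrec m ▸ hf.pos_of_pos (mul_pos (ha _) ih)
  have hab : ∀ᶠ n in atTop, b ≤ a n := by
    simpa [Nat.cofinite_eq_atTop] using hfin.eventually_cofinite_notMem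
  obtain ⟨M, hM⟩ := hf.2.2.1
  refine le_liminf_of_apply_le_succ (g := fun t => f (b * t)) (hf.continuous.comp (continuous_const_mul b))
    (hf.strictMono.monotone.comp (monotone_mul_left_of_nonneg hb.le)) hξpos hξfix
    (fun t ht => lt_apply_mul_of_mem_Ioo hf.strictConcaveOn_Ici hf.map_zero hb hξfix ht)
    hpos ?_ ⟨M, eventually_atTop.2 ⟨1, fun m hm => ?_⟩⟩
  · filter_upwards [(tendsto_add_atTop_nat 1).eventually hab] with m hm
    rw [hrec]
    exact hf.strictMono.monotone (mul_le_mul_of_nonneg_right hm (hpos m).le)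
  · obtain ⟨k, rfl⟩ := Nat.exists_eq_add_of_le' hm
    show |Φ (k + 1) x| ≤ M
    exact hΦ k x ▸ hM _

theorem stmt_10 (f : ℝ → ℝ) (hf : OddSigmoid f) (ε : ℝ) (hε : 0 < ε)
    (a : ℕ → ℝ) (ha : ∀ n, 0 < a n)
    (hfin : {n : ℕ | a n < 1 / deriv f 0 + ε}.Finite)
    (Φ : ℕ → ℝ → ℝ) (hΦ0 : ∀ x, Φ 0 x = x)
    (hΦ : ∀ m x, Φ (m + 1) x = f (a (m + 1) * Φ m x))
    (ξ : ℝ) (hξpos : 0 < ξ) (hξfix : f ((1 / deriv f 0 + ε) * ξ) = ξ)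
    (hξuniq : ∀ y : ℝ, 0 < y → f ((1 / deriv f 0 + ε) * y) = y → y = ξ) :
    ∀ x : ℝ, x ≠ 0 → ξ ≤ Filter.atTop.liminf (fun m => |Φ m x|) :=
  stmt_10_general f hf ε hε a ha hfin Φ hΦ0 hΦ ξ hξpos hξfix
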